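/- Let E be a group, Z a central subgroup of E, and suppose the quotient E/Z is perfect. Given elements g₁,...,g_n, g₁',...,g_n' of E/Z satisfying ∏ᵢ [gᵢ, gᵢ'] = 1, the element ∏ᵢ [g̃ᵢ, g̃ᵢ'] ∈ E, computed with arbitrary lifts g̃ᵢ, g̃ᵢ' ∈ E, lies in Z and does not depend on the choice of lifts. -/

import Mathlib

open scoped commutatorElement

section CentralCommutator

variable {G : Type*} [Group G]

theorem commutatorElement_mul_mem_center_left {z : G} (hz : z ∈ Subgroup.center G) (a b : G) :
    ⁅a * z, b⁆ = ⁅a, b⁆ := by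
  have hzb : ⁅z, b⁆ = 1 :=
    commutatorElement_eq_one_iff_commute.mpr (Subgroup.mem_center_iff.mp hz b).symm
  rw [commutatorElement_mul_left_eq_conj_mul, hzb, mul_one, mul_inv_cancel, one_mul]

theorem commutatorElement_mul_mem_center_right {z : G} (hz : z ∈ Subgroup.center G) (a b : G) :
    ⁅a, b * z⁆ = ⁅a, b⁆ := by
  have haz : ⁅a, z⁆ = 1 :=
    commutatorElement_eq_one_iff_commute.mpr (Subgroup.mem_center_iff.mp hz a)
  rw [commutatorElement_mul_right_eq_mul_conj, haz, mul_one, mul_inv_cancel_right]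

theorem commutatorElement_eq_of_mk_eq {Z : Subgroup G} [Z.Normal] (hZ : Z ≤ Subgroup.center G)
    {a b c d : G} (hab : (a : G ⧸ Z) = b) (hcd : (c : G ⧸ Z) = d) : ⁅a, c⁆ = ⁅b, d⁆ := by
  rw [QuotientGroup.eq] at hab hcd
  calc ⁅a, c⁆ = ⁅a * (a⁻¹ * b), c * (c⁻¹ * d)⁆ := by
        rw [commutatorElement_mul_mem_center_left (hZ hab),
          commutatorElement_mul_mem_center_right (hZ hcd)]
    _ = ⁅b, d⁆ := by rw [mul_inv_cancel_left, mul_inv_cancel_left]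

end CentralCommutator

theorem map_list_ofFn_prod_commutatorElement {G H : Type*} [Group G] [Group H] (f : G →* H)
    {n : ℕ} (a b : Fin n → G) :
    f (List.ofFn fun i => ⁅a i, b i⁆).prod = (List.ofFn fun i => ⁅f (a i), f (b i)⁆).prod := by
  simp [map_list_prod, List.map_ofFn, Function.comp_def, map_commutatorElement]

theorem central_quotient_commutator_lifts_well_defined_general
    (E : Type*) [Group E] (Z : Subgroup E) [Z.Normal]
    (hZ : Z ≤ Subgroup.center E)
    (n : ℕ) (g g' : Fin n → E ⧸ Z)
    (hrel : (List.ofFn fun i => ⁅g i, g' i⁆).prod = 1)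
    (t t' s s' : Fin n → E)
    (ht : ∀ i, (t i : E ⧸ Z) = g i) (ht' : ∀ i, (t' i : E ⧸ Z) = g' i)
    (hs : ∀ i, (s i : E ⧸ Z) = g i) (hs' : ∀ i, (s' i : E ⧸ Z) = g' i) :
    (List.ofFn fun i => ⁅t i, t' i⁆).prod ∈ Z ∧
      (List.ofFn fun i => ⁅t i, t' i⁆).prod =
        (List.ofFn fun i => ⁅s i, s' i⁆).prod := by
  have hlifts : ∀ i, ⁅t i, t' i⁆ = ⁅s i, s' i⁆ := fun i =>
    commutatorElement_eq_of_mk_eq hZ ((ht i).trans (hs i).symm) ((ht' i).trans (hs' i).symm)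
  refine ⟨?_, by simp only [hlifts]⟩
  rw [← QuotientGroup.eq_one_iff, ← QuotientGroup.mk'_apply,
    map_list_ofFn_prod_commutatorElement]
  simpa only [QuotientGroup.mk'_apply, ht, ht'] using hrel

theorem central_quotient_commutator_lifts_well_defined
    (E : Type*) [Group E] (Z : Subgroup E) [Z.Normal]
    (hZ : Z ≤ Subgroup.center E)
    (hperf : commutator (E ⧸ Z) = ⊤)
    (n : ℕ) (g g' : Fin n → E ⧸ Z)
    (hrel : (List.ofFn fun i => ⁅g i, g' i⁆).prod = 1)
    (t t' s s' : Fin n → E)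
    (ht : ∀ i, (t i : E ⧸ Z) = g i) (ht' : ∀ i, (t' i : E ⧸ Z) = g' i)
    (hs : ∀ i, (s i : E ⧸ Z) = g i) (hs' : ∀ i, (s' i : E ⧸ Z) = g' i) :
    (List.ofFn fun i => ⁅t i, t' i⁆).prod ∈ Z ∧
      (List.ofFn fun i => ⁅t i, t' i⁆).prod =
        (List.ofFn fun i => ⁅s i, s' i⁆).prod :=
  central_quotient_commutator_lifts_well_defined_general E Z hZ n g g' hrel t t' s s' ht ht' hs hs'
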